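/- arXiv:2506.20146 — 7 statements merged into one kernel-verified Lean document; each statement's English description precedes it below -/
import Mathlib

section
/- Let d ≥ 1 and let K ⊂ ℝ^d be a compact set. Let Q : ℝ → ℝ be twice continuously differentiable with Q'(0) = 0. Set α(t) := t^{-1/4} and β(t) := t^{3/2}, and for each Borel probability measure μ on ℝ^d supported in K define J_t(μ) := −(t²/(2β(t))) ∬ (Q(δ_{α(t)}(z,w)) − Q(0)) dμ(z) dμ(w). Then, as t → ∞, J_t(μ) converges to J(μ) := −(Q''(0)/4) ∬ |z − w|² dμ(z) dμ(w), uniformly over all probability measures μ supported in K; i.e. for every ε > 0 there exists T > 0 such that for all t ≥ T and all Borel probability measures μ with μ(K) = 1, one has |J_t(μ) − J(μ)| ≤ ε. -/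
/-
Write `a = α‖z‖`, `b = α‖w‖` and `θ` for the angle between `z` and `w`. Then `cosh δ_α(z,w)` is
the hyperbolic law of cosines for a triangle with sides `a`, `b` enclosing the angle `θ`, while
`α²‖z - w‖²` is the squared third side of the Euclidean triangle with the same data. Since
`x²/2 ≤ cosh x - 1 ≤ (x²/2) cosh x`, the two third sides satisfy
`|δ_α² - α²‖z - w‖²| ≤ (cosh (2αR) - 1) α²‖z - w‖²` for `‖z‖, ‖w‖ ≤ R`, and `δ_α ≤ 2αR`.
As `Q'(0) = 0`, Taylor's theorem gives `Q(s) - Q(0) = Q''(0)s²/2 + o(s²)`, hence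
`(Q(δ_α) - Q(0)) / (2α²) → Q''(0)/4 · ‖z - w‖²` uniformly on `K × K` as `α → 0⁺`.
For `α = t^(-1/4)` the prefactor `t²/(2β(t))` is exactly `1/(2α²)`, and `μ ⊗ μ` is carried
by `K × K`, so integrating the uniform estimate gives the claim.
-/

open Real Filter Topology Asymptotics MeasureTheory InnerProductGeometry Function

namespace Real

theorem sinh_le_mul_cosh {x : ℝ} (hx : 0 ≤ x) : sinh x ≤ x * cosh x := by
  have h := (convex_Icc 0 x).image_sub_le_mul_sub_of_deriv_le continuous_sinh.continuousOn
    differentiable_sinh.differentiableOn (C := cosh x) (fun y hy => by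
      rw [interior_Icc] at hy
      rw [deriv_sinh, cosh_le_cosh, abs_of_pos hy.1, abs_of_nonneg hx]
      exact hy.2.le) 0 ⟨le_rfl, hx⟩ x ⟨hx, le_rfl⟩ hx
  simpa [mul_comm] using h

theorem cosh_sub_one_eq_two_mul_sinh_half_sq (x : ℝ) : cosh x - 1 = 2 * sinh (x / 2) ^ 2 := by
  have h := cosh_two_mul (x / 2)
  rw [mul_div_cancel₀ x two_ne_zero, cosh_sq] at h
  linarith

theorem sq_div_two_le_cosh_sub_one (x : ℝ) : x ^ 2 / 2 ≤ cosh x - 1 := by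
  have h : |x / 2| ≤ |sinh (x / 2)| := by
    rw [abs_sinh]; exact self_le_sinh_iff.2 (abs_nonneg _)
  nlinarith [cosh_sub_one_eq_two_mul_sinh_half_sq x, sq_le_sq.2 h]

theorem cosh_sub_one_le_sq_div_two_mul_cosh (x : ℝ) : cosh x - 1 ≤ x ^ 2 / 2 * cosh x := by
  have h : |sinh (x / 2)| ≤ |x / 2| * cosh (x / 2) := by
    rw [abs_sinh, ← cosh_abs (x / 2)]; exact sinh_le_mul_cosh (abs_nonneg _)
  have h2 : sinh (x / 2) ^ 2 ≤ (x / 2) ^ 2 * cosh (x / 2) ^ 2 := by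
    simpa [mul_pow] using sq_le_sq.2 (h.trans_eq (abs_of_nonneg (by positivity)).symm)
  have h3 : 2 * cosh (x / 2) ^ 2 = cosh x + 1 := by
    rw [cosh_sq]; linarith [cosh_sub_one_eq_two_mul_sinh_half_sq x]
  nlinarith [one_le_cosh x, sq_nonneg x, cosh_sub_one_eq_two_mul_sinh_half_sq x]

end Real

theorem ContDiff.isLittleO_sub_taylor_two {f : ℝ → ℝ} (hf : ContDiff ℝ 2 f) (x₀ : ℝ) :
    (fun x => f x - f x₀ - deriv f x₀ * (x - x₀) - iteratedDeriv 2 f x₀ / 2 * (x - x₀) ^ 2)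
      =o[𝓝 x₀] fun x => (x - x₀) ^ 2 := by
  refine (taylor_isLittleO_univ hf).congr_left fun x => ?_
  simp [taylor_within_apply, iteratedDerivWithin_univ]
  ring

section HyperbolicTriangle

variable {a b θ D : ℝ}

theorem abs_le_add_of_cosh_eq (ha : 0 ≤ a) (hb : 0 ≤ b)
    (hD : cosh D = cosh a * cosh b - sinh a * sinh b * cos θ) : |D| ≤ a + b := by
  have hs : 0 ≤ sinh a * sinh b := mul_nonneg (sinh_nonneg_iff.2 ha) (sinh_nonneg_iff.2 hb)
  have hD' : cosh D ≤ cosh (a + b) := by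
    rw [hD, cosh_add]; nlinarith [neg_one_le_cos θ]
  simpa [abs_of_nonneg (add_nonneg ha hb)] using cosh_le_cosh.1 hD'

theorem abs_sq_sub_sq_le_of_cosh_eq (ha : 0 ≤ a) (hb : 0 ≤ b)
    (hD : cosh D = cosh a * cosh b - sinh a * sinh b * cos θ) :
    |D ^ 2 - (a ^ 2 + b ^ 2 - 2 * a * b * cos θ)| ≤
      (cosh (a + b) - 1) * (a ^ 2 + b ^ 2 - 2 * a * b * cos θ) := by
  set e := a ^ 2 + b ^ 2 - 2 * a * b * cos θ
  set C := cosh (a + b)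
  have hcos : 0 ≤ 1 - cos θ := sub_nonneg.2 (cos_le_one θ)
  have hsinh : a * b ≤ sinh a * sinh b :=
    mul_le_mul (self_le_sinh_iff.2 ha) (self_le_sinh_iff.2 hb) hb (sinh_nonneg_iff.2 ha)
  have hcosh : cosh a * cosh b ≤ C := by
    have : C = cosh a * cosh b + sinh a * sinh b := cosh_add a b
    nlinarith [sinh_nonneg_iff.2 ha, sinh_nonneg_iff.2 hb]
  have hsplit : cosh D - 1 = (cosh (a - b) - 1) + sinh a * sinh b * (1 - cos θ) := by
    rw [hD, cosh_sub]; ring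
  have he : e = (a - b) ^ 2 + 2 * (a * b) * (1 - cos θ) := by ring
  have hC : cosh (a - b) ≤ C := cosh_le_cosh.2 (by
    rw [abs_of_nonneg (add_nonneg ha hb)]; exact abs_sub_le_iff.2 ⟨by linarith, by linarith⟩)
  have hlower : e / 2 ≤ cosh D - 1 := by
    nlinarith [sq_div_two_le_cosh_sub_one (a - b), mul_le_mul_of_nonneg_right hsinh hcos]
  have hupper : cosh D - 1 ≤ C * e / 2 := by
    have h1 : sinh a * sinh b ≤ a * b * C := by
      nlinarith [sinh_le_mul_cosh ha, sinh_le_mul_cosh hb, sinh_nonneg_iff.2 ha,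
        sinh_nonneg_iff.2 hb, one_le_cosh a, one_le_cosh b, mul_nonneg ha hb]
    nlinarith [cosh_sub_one_le_sq_div_two_mul_cosh (a - b), mul_le_mul_of_nonneg_right h1 hcos,
      sq_nonneg (a - b)]
  have hDC : cosh D ≤ C := by
    simpa [C, cosh_le_cosh] using abs_le_add_of_cosh_eq ha hb hD |>.trans (le_abs_self _)
  have h1 : D ^ 2 ≤ C * e := by nlinarith [sq_div_two_le_cosh_sub_one D]
  have h2 : e ≤ C * D ^ 2 := by nlinarith [cosh_sub_one_le_sq_div_two_mul_cosh D, sq_nonneg D]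
  have hC1 : 1 ≤ C := one_le_cosh _
  have he0 : 0 ≤ e := by rw [he]; positivity
  rw [abs_le]
  constructor <;> nlinarith [sq_nonneg (C - 1), mul_nonneg (sub_nonneg.2 hC1) he0]

end HyperbolicTriangle

section RescaledDistance

variable {E : Type*} [NormedAddCommGroup E] [InnerProductSpace ℝ E]

noncomputable def coshRescaledDist (α : ℝ) (z w : E) : ℝ :=
  cosh (α * ‖z‖) * cosh (α * ‖w‖) - sinh (α * ‖z‖) * sinh (α * ‖w‖) * (inner ℝ z w / (‖z‖ * ‖w‖))

theorem coshRescaledDist_eq_cos_angle (α : ℝ) (z w : E) :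
    coshRescaledDist α z w =
      cosh (α * ‖z‖) * cosh (α * ‖w‖) - sinh (α * ‖z‖) * sinh (α * ‖w‖) * cos (angle z w) := by
  rw [coshRescaledDist, cos_angle]

variable {α D : ℝ} {z w : E}

theorem abs_le_of_cosh_eq_coshRescaledDist (hα : 0 ≤ α) (hD : cosh D = coshRescaledDist α z w) :
    |D| ≤ α * (‖z‖ + ‖w‖) := by
  rw [coshRescaledDist_eq_cos_angle] at hD
  rw [mul_add]
  exact abs_le_add_of_cosh_eq (by positivity) (by positivity) hD

theorem abs_sq_sub_le_of_cosh_eq_coshRescaledDist (hα : 0 ≤ α)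
    (hD : cosh D = coshRescaledDist α z w) :
    |D ^ 2 - α ^ 2 * ‖z - w‖ ^ 2| ≤ (cosh (α * (‖z‖ + ‖w‖)) - 1) * (α ^ 2 * ‖z - w‖ ^ 2) := by
  rw [coshRescaledDist_eq_cos_angle] at hD
  have hlaw : α ^ 2 * ‖z - w‖ ^ 2 = (α * ‖z‖) ^ 2 + (α * ‖w‖) ^ 2 -
      2 * (α * ‖z‖) * (α * ‖w‖) * cos (angle z w) := by
    linear_combination α ^ 2 *
      norm_sub_sq_eq_norm_sq_add_norm_sq_sub_two_mul_norm_mul_norm_mul_cos_angle z w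
  rw [hlaw, mul_add]
  exact abs_sq_sub_sq_le_of_cosh_eq (by positivity) (by positivity) hD

theorem abs_inv_two_mul_sq_mul_sub_le {Q : ℝ → ℝ} {q η R : ℝ}
    (hQ : ∀ s, |s| ≤ 2 * α * R → |Q s - Q 0 - q / 2 * s ^ 2| ≤ η * s ^ 2) (hη : 0 ≤ η)
    (hα : 0 < α) (hz : ‖z‖ ≤ R) (hw : ‖w‖ ≤ R) (hD : cosh D = coshRescaledDist α z w) :
    |(2 * α ^ 2)⁻¹ * (Q D - Q 0) - q / 4 * ‖z - w‖ ^ 2| ≤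
      2 * η * R ^ 2 + |q| * R ^ 2 * (cosh (2 * α * R) - 1) := by
  have hR : 0 ≤ R := (norm_nonneg z).trans hz
  have hDR : |D| ≤ 2 * α * R := by
    nlinarith [abs_le_of_cosh_eq_coshRescaledDist hα.le hD]
  have hzw : ‖z - w‖ ^ 2 ≤ 4 * R ^ 2 := by
    nlinarith [norm_sub_le z w, norm_nonneg (z - w)]
  have hcosh : cosh (α * (‖z‖ + ‖w‖)) ≤ cosh (2 * α * R) := by
    rw [cosh_le_cosh, abs_of_nonneg (by positivity), abs_of_nonneg (by positivity)]
    nlinarith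
  have hsq : |D ^ 2 - α ^ 2 * ‖z - w‖ ^ 2| ≤ (cosh (2 * α * R) - 1) * (α ^ 2 * (4 * R ^ 2)) := by
    refine (abs_sq_sub_le_of_cosh_eq_coshRescaledDist hα.le hD).trans ?_
    gcongr
    linarith [one_le_cosh (2 * α * R)]
  have hT : |Q D - Q 0 - q / 2 * D ^ 2| ≤ η * (α ^ 2 * (4 * R ^ 2)) := by
    refine (hQ D hDR).trans (mul_le_mul_of_nonneg_left ?_ hη)
    nlinarith [sq_abs D, abs_nonneg D]
  calc |(2 * α ^ 2)⁻¹ * (Q D - Q 0) - q / 4 * ‖z - w‖ ^ 2|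
      = |(2 * α ^ 2)⁻¹ * (Q D - Q 0 - q / 2 * D ^ 2) +
          q / (4 * α ^ 2) * (D ^ 2 - α ^ 2 * ‖z - w‖ ^ 2)| := by
        congr 1; field_simp; ring
    _ ≤ (2 * α ^ 2)⁻¹ * (η * (α ^ 2 * (4 * R ^ 2))) +
          |q| / (4 * α ^ 2) * ((cosh (2 * α * R) - 1) * (α ^ 2 * (4 * R ^ 2))) := by
        refine (abs_add_le _ _).trans (add_le_add ?_ ?_)
        · rw [abs_mul, abs_of_pos (by positivity)]; gcongr
        · rw [abs_mul, abs_div, abs_of_pos (by positivity : (0:ℝ) < 4 * α ^ 2)]; gcongr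
    _ = 2 * η * R ^ 2 + |q| * R ^ 2 * (cosh (2 * α * R) - 1) := by
        field_simp; ring

theorem eventually_abs_inv_two_mul_sq_mul_sub_le {Q : ℝ → ℝ} (hQ : ContDiff ℝ 2 Q)
    (hQ' : deriv Q 0 = 0)
    {δ : ℝ → E → E → ℝ} (hδ : ∀ α z w, cosh (δ α z w) = coshRescaledDist α z w) (R : ℝ)
    {ε : ℝ} (hε : 0 < ε) :
    ∀ᶠ α in 𝓝[>] 0, ∀ z w : E, ‖z‖ ≤ R → ‖w‖ ≤ R →
      |(2 * α ^ 2)⁻¹ * (Q (δ α z w) - Q 0) - iteratedDeriv 2 Q 0 / 4 * ‖z - w‖ ^ 2| ≤ ε := by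
  set q := iteratedDeriv 2 Q 0
  set η := ε / (4 * (R ^ 2 + 1))
  have hη : 0 < η := by positivity
  obtain ⟨ρ, hρ, hTaylor⟩ : ∃ ρ > 0, ∀ s, |s| < ρ → |Q s - Q 0 - q / 2 * s ^ 2| ≤ η * s ^ 2 := by
    have h := (hQ.isLittleO_sub_taylor_two 0).def hη
    simp only [hQ', sub_zero, zero_mul, Real.norm_eq_abs, abs_pow, sq_abs] at h
    obtain ⟨ρ, hρ, hρ'⟩ := Metric.eventually_nhds_iff.1 h
    exact ⟨ρ, hρ, fun s hs => hρ' (by rwa [Real.dist_eq, sub_zero])⟩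
  have hρ' : ∀ᶠ α in 𝓝 0, 2 * α * R < ρ :=
    (by fun_prop : Continuous fun α : ℝ => 2 * α * R).continuousAt.eventually_lt
      continuousAt_const (by simpa using hρ)
  have hε' : ∀ᶠ α in 𝓝 0, |q| * R ^ 2 * (cosh (2 * α * R) - 1) < ε / 2 :=
    (by fun_prop : Continuous fun α : ℝ => |q| * R ^ 2 * (cosh (2 * α * R) - 1)).continuousAt
      |>.eventually_lt continuousAt_const (by simpa using half_pos hε)
  filter_upwards [self_mem_nhdsWithin, eventually_nhdsWithin_of_eventually_nhds (hρ'.and hε')]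
    with α hα ⟨hαρ, hαε⟩ z w hz hw
  have hηR : 2 * η * R ^ 2 ≤ ε / 2 := by
    rw [show 2 * η * R ^ 2 = ε / 2 * (R ^ 2 / (R ^ 2 + 1)) by simp only [η]; field_simp; ring]
    exact mul_le_of_le_one_right (by positivity) ((div_le_one (by positivity)).2 (by linarith))
  have := abs_inv_two_mul_sq_mul_sub_le (fun s hs => hTaylor s (hs.trans_lt hαρ)) hη.le hα hz hw
    (hδ α z w)
  linarith

theorem measurable_uncurry_of_cosh_eq_coshRescaledDist [MeasurableSpace E] [BorelSpace E]
    [SecondCountableTopology E] {α : ℝ} {D : E → E → ℝ}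
    (hD0 : ∀ z w, 0 ≤ D z w) (hD : ∀ z w, cosh (D z w) = coshRescaledDist α z w) :
    Measurable (uncurry D) := by
  have h : uncurry D = fun p => arcosh (coshRescaledDist α p.1 p.2) :=
    funext fun p => by rw [← hD, arcosh_cosh (hD0 _ _), uncurry_apply_pair]
  rw [h]
  simp only [arcosh, coshRescaledDist]
  fun_prop

end RescaledDistance

theorem ae_mem_prod {X Y : Type*} [MeasurableSpace X] [MeasurableSpace Y] {μ : Measure X}
    {ν : Measure Y} [SFinite ν] {K : Set X} {L : Set Y} (hK : ∀ᵐ x ∂μ, x ∈ K)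
    (hL : ∀ᵐ y ∂ν, y ∈ L) : ∀ᵐ p ∂μ.prod ν, p ∈ K ×ˢ L :=
  (Measure.quasiMeasurePreserving_fst.ae hK).and (Measure.quasiMeasurePreserving_snd.ae hL)

theorem abs_integral_integral_sub_le {X Y : Type*} [MeasurableSpace X] [MeasurableSpace Y]
    {μ : Measure X} {ν : Measure Y} [IsProbabilityMeasure μ] [IsProbabilityMeasure ν]
    {K : Set X} {L : Set Y} (hK : ∀ᵐ x ∂μ, x ∈ K) (hL : ∀ᵐ y ∂ν, y ∈ L) {f g : X → Y → ℝ}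
    (hf : AEStronglyMeasurable (uncurry f) (μ.prod ν)) (hg : Integrable (uncurry g) (μ.prod ν))
    {ε : ℝ} (hfg : ∀ x ∈ K, ∀ y ∈ L, |f x y - g x y| ≤ ε) :
    |∫ x, ∫ y, f x y ∂ν ∂μ - ∫ x, ∫ y, g x y ∂ν ∂μ| ≤ ε := by
  have hbound : ∀ᵐ p ∂μ.prod ν, ‖uncurry f p - uncurry g p‖ ≤ ε :=
    (ae_mem_prod hK hL).mono fun p hp => hfg _ hp.1 _ hp.2
  have hf' : Integrable (uncurry f) (μ.prod ν) := by
    simpa using (Integrable.of_bound (hf.sub hg.1) ε hbound).add hg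
  have h := norm_integral_le_of_norm_le_const hbound
  rw [integral_sub hf' hg, integral_prod _ hf', integral_prod _ hg] at h
  simpa using h

theorem sq_div_two_mul_rpow_three_div_two {t : ℝ} (ht : 0 < t) :
    t ^ 2 / (2 * t ^ ((3 : ℝ) / 2)) = (2 * (t ^ (-(1 : ℝ) / 4)) ^ 2)⁻¹ := by
  have h1 : t ^ 2 / t ^ ((3 : ℝ) / 2) = t ^ ((1 : ℝ) / 2) := by
    rw [← rpow_two, ← rpow_sub ht]; norm_num
  have h2 : (t ^ (-(1 : ℝ) / 4)) ^ 2 = (t ^ ((1 : ℝ) / 2))⁻¹ := by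
    rw [← rpow_mul_natCast ht.le, ← rpow_neg ht.le]; norm_num
  rw [h2, ← h1]
  field_simp

theorem tendsto_rpow_neg_one_div_four_atTop_nhdsGT :
    Tendsto (fun t : ℝ => t ^ (-(1 : ℝ) / 4)) atTop (𝓝[>] 0) := by
  refine tendsto_nhdsWithin_iff.2
    ⟨?_, (eventually_gt_atTop 0).mono fun t ht => rpow_pos_of_pos ht _⟩
  simpa [neg_div] using tendsto_rpow_neg_atTop (y := 1 / 4) (by norm_num)

theorem stmt_0_general (d : ℕ)
    (K : Set (EuclideanSpace ℝ (Fin d))) (hK : IsCompact K)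
    (Q : ℝ → ℝ) (hQ : ContDiff ℝ 2 Q) (hQ'0 : deriv Q 0 = 0)
    (δ : ℝ → EuclideanSpace ℝ (Fin d) → EuclideanSpace ℝ (Fin d) → ℝ)
    (hδ_nonneg : ∀ α z w, 0 ≤ δ α z w)
    (hδ_cosh : ∀ α z w, Real.cosh (δ α z w) =
      Real.cosh (α * ‖z‖) * Real.cosh (α * ‖w‖) -
        Real.sinh (α * ‖z‖) * Real.sinh (α * ‖w‖) *
          ((inner ℝ z w : ℝ) / (‖z‖ * ‖w‖))) :
    ∀ ε > 0, ∃ T > 0, ∀ t ≥ T,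
      ∀ μ : Measure (EuclideanSpace ℝ (Fin d)), IsProbabilityMeasure μ → μ K = 1 →
        |(-(t ^ 2 / (2 * t ^ ((3 : ℝ) / 2))) *
            ∫ z, (∫ w, (Q (δ (t ^ (-(1 : ℝ) / 4)) z w) - Q 0) ∂μ) ∂μ) -
          (-(iteratedDeriv 2 Q 0 / 4) *
            ∫ z, (∫ w, ‖z - w‖ ^ 2 ∂μ) ∂μ)| ≤ ε := by
  intro ε hε
  obtain ⟨R, hR⟩ := hK.isBounded.subset_closedBall 0
  obtain ⟨T, hT⟩ := eventually_atTop.1 <|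
    tendsto_rpow_neg_one_div_four_atTop_nhdsGT.eventually <|
      eventually_abs_inv_two_mul_sq_mul_sub_le hQ hQ'0 hδ_cosh R hε
  refine ⟨max T 1, by positivity, fun t ht μ _ hμK => ?_⟩
  have hKae : ∀ᵐ z ∂μ, z ∈ K := (mem_ae_iff_prob_eq_one hK.measurableSet).2 hμK
  rw [sq_div_two_mul_rpow_three_div_two (by linarith [le_max_right T 1])]
  simp_rw [← integral_const_mul]
  refine abs_integral_integral_sub_le hKae hKae ?_ ?_ fun z hz w hw => ?_
  · exact ((hQ.continuous.measurable.comp (measurable_uncurry_of_cosh_eq_coshRescaledDist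
      (hδ_nonneg _) (hδ_cosh _))).sub_const _).const_mul _ |>.aestronglyMeasurable
  · rw [← Measure.restrict_eq_self_of_ae_mem (ae_mem_prod hKae hKae)]
    exact ContinuousOn.integrableOn_compact (hK.prod hK) (by fun_prop)
  · rw [neg_mul, neg_mul, neg_sub_neg, abs_sub_comm]
    exact hT t (le_of_max_le_left ht) z w (by simpa using hR hz) (by simpa using hR hw)

/-- Uniform convergence of the rescaled functionals `J_t` to the
Euclidean limiting functional `J`.  The rescaled hyperbolic distance `δ α z w` is
characterised as the unique nonnegative number `D` with
`cosh D = cosh(α|z|)·cosh(α|w|) − sinh(α|z|)·sinh(α|w|)·cos γ(z,w)`. -/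
theorem stmt_0 (d : ℕ) (hd : 1 ≤ d)
    (K : Set (EuclideanSpace ℝ (Fin d))) (hK : IsCompact K)
    (Q : ℝ → ℝ) (hQ : ContDiff ℝ 2 Q) (hQ'0 : deriv Q 0 = 0)
    (δ : ℝ → EuclideanSpace ℝ (Fin d) → EuclideanSpace ℝ (Fin d) → ℝ)
    (hδ_nonneg : ∀ α z w, 0 ≤ δ α z w)
    (hδ_cosh : ∀ α z w, Real.cosh (δ α z w) =
      Real.cosh (α * ‖z‖) * Real.cosh (α * ‖w‖) -
        Real.sinh (α * ‖z‖) * Real.sinh (α * ‖w‖) *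
          ((inner ℝ z w : ℝ) / (‖z‖ * ‖w‖))) :
    ∀ ε > 0, ∃ T > 0, ∀ t ≥ T,
      ∀ μ : Measure (EuclideanSpace ℝ (Fin d)), IsProbabilityMeasure μ → μ K = 1 →
        |(-(t ^ 2 / (2 * t ^ ((3 : ℝ) / 2))) *
            ∫ z, (∫ w, (Q (δ (t ^ (-(1 : ℝ) / 4)) z w) - Q 0) ∂μ) ∂μ) -
          (-(iteratedDeriv 2 Q 0 / 4) *
            ∫ z, (∫ w, ‖z - w‖ ^ 2 ∂μ) ∂μ)| ≤ ε :=
  stmt_0_general d K hK Q hQ hQ'0 δ hδ_nonneg hδ_cosh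
end

section
/- Let d ≥ 1 and let K ⊂ ℝ^d be a compact set. Then there exist constants C > 0 and α₀ > 0 such that for all α ∈ (0, α₀) and all z, w ∈ K, one has |δ_α(z,w) − α·|z − w|| ≤ C·α². -/
/-!
Put `a = α‖z‖`, `b = α‖w‖`, `t = α‖z - w‖`, `c = cos γ(z, w)` and `λ = (1 + c) / 2 ∈ [0, 1]`.
The hyperbolic law of cosines reads `cosh δ = λ cosh (a - b) + (1 - λ) cosh (a + b)`, and the
Euclidean one `t² = λ (a - b)² + (1 - λ) (a + b)²`. As `cosh x = 1 + x² / 2 + O(x⁴)` and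
`|a - b|, t ≤ a + b`, the quadratic terms cancel and `|cosh δ - cosh t| = O((a + b)² t²)`.
Finally `(x + y) |x - y| ≤ 2 |cosh x - cosh y|` for `x, y ≥ 0` turns this into
`|δ - t| = O((a + b) t) = O(α²)`.
-/

open Real InnerProductGeometry

namespace Real

lemma abs_le_abs_sinh (x : ℝ) : |x| ≤ |sinh x| := by
  rw [abs_sinh]
  exact self_le_sinh_iff.2 (abs_nonneg x)

lemma cosh_sub_cosh (x y : ℝ) :
    cosh x - cosh y = 2 * sinh ((x + y) / 2) * sinh ((x - y) / 2) := by
  obtain ⟨u, v, rfl, rfl⟩ : ∃ u v, x = u + v ∧ y = u - v :=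
    ⟨(x + y) / 2, (x - y) / 2, by ring, by ring⟩
  rw [show (u + v + (u - v)) / 2 = u by ring, show (u + v - (u - v)) / 2 = v by ring,
    cosh_add, cosh_sub]
  ring

lemma add_mul_abs_sub_le_two_mul_abs_cosh_sub {x y : ℝ} (h : 0 ≤ x + y) :
    (x + y) * |x - y| ≤ 2 * |cosh x - cosh y| := by
  have h₁ : (x + y) / 2 ≤ sinh ((x + y) / 2) := self_le_sinh_iff.2 (by linarith)
  have h₂ : |(x - y) / 2| ≤ |sinh ((x - y) / 2)| := abs_le_abs_sinh _
  rw [abs_div, abs_two] at h₂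
  rw [cosh_sub_cosh, abs_mul, abs_mul, abs_two,
    abs_of_nonneg (sinh_nonneg_iff.2 (by linarith) : 0 ≤ sinh ((x + y) / 2))]
  nlinarith [mul_le_mul h₁ h₂ (by positivity) (by linarith)]

lemma one_add_sq_div_two_le_cosh (x : ℝ) : 1 + x ^ 2 / 2 ≤ cosh x := by
  have h := cosh_sub_cosh x 0
  have hsq : (x / 2) ^ 2 ≤ sinh (x / 2) ^ 2 := sq_le_sq.2 (abs_le_abs_sinh _)
  simp only [cosh_zero, add_zero, sub_zero] at h
  nlinarith

lemma cosh_le_one_add_sq_div_two_add {x : ℝ} (hx : x ^ 2 ≤ 2) :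
    cosh x ≤ 1 + x ^ 2 / 2 + x ^ 4 / 4 := by
  have h := abs_exp_sub_one_sub_id_le (x := x ^ 2 / 2)
    (by rw [abs_of_nonneg (by positivity)]; linarith)
  linarith [cosh_le_exp_half_sq x, (abs_le.1 h).2]

lemma abs_convex_comb_cosh_sub_cosh_le {l p q t : ℝ} (hl₀ : 0 ≤ l) (hl₁ : l ≤ 1) (hpq : |p| ≤ q)
    (hq : q ^ 2 ≤ 2) (ht : t ^ 2 = l * p ^ 2 + (1 - l) * q ^ 2) :
    |l * cosh p + (1 - l) * cosh q - cosh t| ≤ q ^ 2 * t ^ 2 / 4 := by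
  have hp : p ^ 2 ≤ q ^ 2 := sq_le_sq.2 (hpq.trans (le_abs_self q))
  have htq : t ^ 2 ≤ q ^ 2 := by nlinarith
  have hp_up := cosh_le_one_add_sq_div_two_add (hp.trans hq)
  have hq_up := cosh_le_one_add_sq_div_two_add hq
  have ht_up := cosh_le_one_add_sq_div_two_add (htq.trans hq)
  have hp_low := one_add_sq_div_two_le_cosh p
  have hq_low := one_add_sq_div_two_le_cosh q
  have ht_low := one_add_sq_div_two_le_cosh t
  rw [abs_le]
  constructor <;> nlinarith [mul_le_mul_of_nonneg_left htq (sq_nonneg t)]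

lemma abs_sub_le_of_abs_cosh_sub_le {x y ε : ℝ} (hx : 0 ≤ x) (hy : 0 ≤ y) (hε : 0 ≤ ε)
    (h : |cosh x - cosh y| ≤ ε ^ 2 * y ^ 2 / 2) : |x - y| ≤ ε * y := by
  have hxy : |x - y| ≤ x + y := abs_sub_le_iff.2 ⟨by linarith, by linarith⟩
  have hsq : |x - y| ^ 2 ≤ (ε * y) ^ 2 :=
    calc |x - y| ^ 2 ≤ (x + y) * |x - y| := by
          rw [sq]; exact mul_le_mul_of_nonneg_right hxy (abs_nonneg _)
      _ ≤ 2 * |cosh x - cosh y| := add_mul_abs_sub_le_two_mul_abs_cosh_sub (by linarith)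
      _ ≤ (ε * y) ^ 2 := by linarith [mul_pow ε y 2]
  exact (pow_le_pow_iff_left₀ (abs_nonneg _) (by positivity) two_ne_zero).1 hsq

end Real

lemma abs_sub_le_of_cosh_eq_hyperbolic_law_of_cosines {a b c δ t : ℝ} (ha : 0 ≤ a) (hb : 0 ≤ b)
    (hab : a + b ≤ 1) (hc : |c| ≤ 1) (hδ : 0 ≤ δ) (ht₀ : 0 ≤ t)
    (ht : t ^ 2 = a ^ 2 + b ^ 2 - 2 * a * b * c)
    (hcosh : cosh δ = cosh a * cosh b - sinh a * sinh b * c) :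
    |δ - t| ≤ (a + b) ^ 2 := by
  obtain ⟨hc₀, hc₁⟩ := abs_le.1 hc
  set l := (1 + c) / 2 with hl
  have hl₀ : 0 ≤ l := by linarith
  have hl₁ : l ≤ 1 := by linarith
  have hcosh' : cosh δ = l * cosh (a - b) + (1 - l) * cosh (a + b) := by
    rw [hcosh, cosh_add, cosh_sub]; ring
  have ht' : t ^ 2 = l * (a - b) ^ 2 + (1 - l) * (a + b) ^ 2 := by rw [ht]; ring
  have hclose : |cosh δ - cosh t| ≤ (a + b) ^ 2 * t ^ 2 / 2 := by
    rw [hcosh']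
    refine (abs_convex_comb_cosh_sub_cosh_le hl₀ hl₁ ?_ (by nlinarith) ht').trans ?_
    · exact abs_sub_le_iff.2 ⟨by linarith, by linarith⟩
    · have := mul_nonneg (sq_nonneg (a + b)) (sq_nonneg t); linarith
  have htab : t ≤ a + b :=
    (pow_le_pow_iff_left₀ ht₀ (by positivity) two_ne_zero).1
      (by nlinarith [mul_nonneg (mul_nonneg ha hb) (by linarith : (0 : ℝ) ≤ 1 + c)])
  calc |δ - t| ≤ (a + b) * t := abs_sub_le_of_abs_cosh_sub_le hδ ht₀ (by positivity) hclose
    _ ≤ (a + b) ^ 2 := by rw [sq]; exact mul_le_mul_of_nonneg_left htab (by positivity)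

theorem stmt_2_general (d : ℕ)
    (K : Set (EuclideanSpace ℝ (Fin d))) (hK : IsCompact K) :
    ∃ C > 0, ∃ α₀ > 0, ∀ α ∈ Set.Ioo (0 : ℝ) α₀, ∀ z ∈ K, ∀ w ∈ K, ∀ D : ℝ,
      0 ≤ D →
      Real.cosh D =
        Real.cosh (α * ‖z‖) * Real.cosh (α * ‖w‖) -
          Real.sinh (α * ‖z‖) * Real.sinh (α * ‖w‖) *
            ((inner ℝ z w : ℝ) / (‖z‖ * ‖w‖)) →
      |D - α * ‖z - w‖| ≤ C * α ^ 2 := by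
  obtain ⟨R, hR, hKR⟩ := hK.isBounded.exists_pos_norm_le
  refine ⟨4 * R ^ 2, by positivity, 1 / (2 * R), by positivity, ?_⟩
  rintro α ⟨hα₀, hα⟩ z hz w hw D hD hcosh
  rw [lt_div_iff₀ (by positivity)] at hα
  have hsum : α * ‖z‖ + α * ‖w‖ ≤ 2 * R * α := by nlinarith [hKR z hz, hKR w hw]
  rw [← cos_angle] at hcosh
  have hlaw := norm_sub_sq_eq_norm_sq_add_norm_sq_sub_two_mul_norm_mul_norm_mul_cos_angle z w
  calc |D - α * ‖z - w‖| ≤ (α * ‖z‖ + α * ‖w‖) ^ 2 :=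
        abs_sub_le_of_cosh_eq_hyperbolic_law_of_cosines (by positivity) (by positivity)
          (by linarith) (abs_cos_le_one _) hD (by positivity)
          (by linear_combination α ^ 2 * hlaw) hcosh
    _ ≤ (2 * R * α) ^ 2 := pow_le_pow_left₀ (by positivity) hsum 2
    _ = 4 * R ^ 2 * α ^ 2 := by ring

/-- First–order expansion of the rescaled hyperbolic distance on a
compact set: `|δ_α(z,w) − α|z−w|| ≤ C α²` for all small `α > 0` and `z, w ∈ K`.
Here `D = δ_α(z,w)` is the unique `D ≥ 0` with
`cosh D = cosh(α|z|)cosh(α|w|) − sinh(α|z|)sinh(α|w|)·cos γ(z,w)`. -/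
theorem stmt_2 (d : ℕ) (hd : 1 ≤ d)
    (K : Set (EuclideanSpace ℝ (Fin d))) (hK : IsCompact K) :
    ∃ C > 0, ∃ α₀ > 0, ∀ α ∈ Set.Ioo (0 : ℝ) α₀, ∀ z ∈ K, ∀ w ∈ K, ∀ D : ℝ,
      0 ≤ D →
      Real.cosh D =
        Real.cosh (α * ‖z‖) * Real.cosh (α * ‖w‖) -
          Real.sinh (α * ‖z‖) * Real.sinh (α * ‖w‖) *
            ((inner ℝ z w : ℝ) / (‖z‖ * ‖w‖)) →
      |D - α * ‖z - w‖| ≤ C * α ^ 2 :=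
  stmt_2_general d K hK
end

section
/- Let E be a finite-dimensional real inner product space, let x ∈ E, let ψ : E → ℝ be differentiable at x, and let φ_1, …, φ_N : E → ℝ be functions differentiable at x such that ∑_{m=1}^N φ_m(y)² = 1 for all y in some neighborhood of x. Then ∑_{m=1}^N ‖∇(ψ·φ_m)(x)‖² = ‖∇ψ(x)‖² + ψ(x)² · ∑_{m=1}^N ‖∇φ_m(x)‖², where ∇ denotes the gradient. -/
/-!
Differentiating `∑ φ_m² ≡ 1` at `x` gives `∑ φ_m(x) ∇φ_m(x) = 0`. Expanding
`‖∇(ψ φ_m)‖² = ‖φ_m ∇ψ + ψ ∇φ_m‖²` and summing over `m`, the squares `φ_m(x)²` add up to `1`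
and the cross terms add up to `2 ψ(x) ⟪∇ψ(x), ∑ φ_m(x) ∇φ_m(x)⟫ = 0`.
-/

open Topology InnerProductSpace

section Gradient

variable {F : Type*} [NormedAddCommGroup F] [InnerProductSpace ℝ F] [CompleteSpace F]
  {x : F}

theorem HasGradientAt.mul {f g : F → ℝ} {f' g' : F} (hf : HasGradientAt f f' x)
    (hg : HasGradientAt g g' x) :
    HasGradientAt (fun y => f y * g y) (f x • g' + g x • f') x := by
  rw [hasGradientAt_iff_hasFDerivAt] at hf hg ⊢
  simpa only [map_add, map_smul] using hf.fun_mul hg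

theorem HasGradientAt.sum {ι : Type*} (s : Finset ι) {f : ι → F → ℝ} {f' : ι → F}
    (h : ∀ i ∈ s, HasGradientAt (f i) (f' i) x) :
    HasGradientAt (fun y => ∑ i ∈ s, f i y) (∑ i ∈ s, f' i) x := by
  simp only [hasGradientAt_iff_hasFDerivAt, map_sum] at h ⊢
  exact HasFDerivAt.fun_sum h

theorem sum_smul_gradient_eq_zero_of_sum_sq_eventually_eq_one {ι : Type*} [Fintype ι]
    {φ : ι → F → ℝ} (hφ : ∀ i, DifferentiableAt ℝ (φ i) x)
    (h : ∀ᶠ y in 𝓝 x, ∑ i, φ i y ^ 2 = 1) :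
    ∑ i, φ i x • gradient (φ i) x = 0 := by
  have hsq : HasGradientAt (fun y => ∑ i, φ i y * φ i y)
      (∑ i, (φ i x • gradient (φ i) x + φ i x • gradient (φ i) x)) x :=
    HasGradientAt.sum _ fun i _ => (hφ i).hasGradientAt.mul (hφ i).hasGradientAt
  have hconst : HasGradientAt (fun y => ∑ i, φ i y * φ i y) 0 x :=
    (hasGradientAt_const x 1).congr_of_eventuallyEq <| by
      filter_upwards [h] with y hy
      simpa only [sq] using hy
  have htwice : (2 : ℝ) • ∑ i, φ i x • gradient (φ i) x = 0 := by
    simpa only [Finset.smul_sum, two_smul] using hsq.unique hconst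
  exact (smul_eq_zero.mp htwice).resolve_left two_ne_zero

end Gradient

theorem sum_norm_smul_add_smul_sq_of_sum_sq_eq_one {F ι : Type*} [NormedAddCommGroup F]
    [InnerProductSpace ℝ F] (s : Finset ι) (a : ℝ) (c : ι → ℝ) (u : F) (v : ι → F)
    (hc : ∑ i ∈ s, c i ^ 2 = 1) (hcv : ∑ i ∈ s, c i • v i = 0) :
    ∑ i ∈ s, ‖a • v i + c i • u‖ ^ 2 = ‖u‖ ^ 2 + a ^ 2 * ∑ i ∈ s, ‖v i‖ ^ 2 := by
  have hexpand : ∀ i, ‖a • v i + c i • u‖ ^ 2 =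
      a ^ 2 * ‖v i‖ ^ 2 + 2 * a * ⟪u, c i • v i⟫_ℝ + c i ^ 2 * ‖u‖ ^ 2 := by
    intro i
    simp only [norm_add_sq_real, norm_smul, real_inner_smul_left, real_inner_smul_right, mul_pow,
      Real.norm_eq_abs, sq_abs, real_inner_comm (v i) u]
    ring
  simp only [hexpand, Finset.sum_add_distrib, ← Finset.mul_sum, ← Finset.sum_mul, ← inner_sum,
    hc, hcv, inner_zero_right]
  ring

/-- Gradient identity for a partition of unity: if `∑ φ_m² ≡ 1` near
`x`, then `∑_m ‖∇(ψ φ_m)(x)‖² = ‖∇ψ(x)‖² + ψ(x)² ∑_m ‖∇φ_m(x)‖²`. -/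
theorem stmt_7 {E : Type*} [NormedAddCommGroup E] [InnerProductSpace ℝ E]
    [FiniteDimensional ℝ E] (x : E) (ψ : E → ℝ) (hψ : DifferentiableAt ℝ ψ x)
    (N : ℕ) (φ : Fin N → E → ℝ) (hφ : ∀ m, DifferentiableAt ℝ (φ m) x)
    (hsum : ∀ᶠ y in nhds x, ∑ m : Fin N, (φ m y) ^ 2 = 1) :
    ∑ m : Fin N, ‖gradient (fun y => ψ y * φ m y) x‖ ^ 2 =
      ‖gradient ψ x‖ ^ 2 + ψ x ^ 2 * ∑ m : Fin N, ‖gradient (φ m) x‖ ^ 2 := by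
  have hprod : ∀ m, gradient (fun y => ψ y * φ m y) x =
      ψ x • gradient (φ m) x + φ m x • gradient ψ x :=
    fun m => (hψ.hasGradientAt.mul (hφ m).hasGradientAt).gradient
  simp only [hprod]
  exact sum_norm_smul_add_smul_sq_of_sum_sq_eq_one _ _ _ _ _ hsum.self_of_nhds
    (sum_smul_gradient_eq_zero_of_sum_sq_eventually_eq_one hφ hsum)
end

section
/- Let E be a finite-dimensional real inner product space, let θ ∈ [0, 1], let x ∈ E, and let φ, ψ : E → ℝ be differentiable at x. Define ζ : E → ℝ by ζ(y) := √((1−θ)·φ(y)² + θ·ψ(y)²), and assume ζ(x) > 0. Then ζ is differentiable at x and ‖∇ζ(x)‖² ≤ (1−θ)·‖∇φ(x)‖² + θ·‖∇ψ(x)‖². -/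
/-!
By the chain rule `∇ζ = ζ⁻¹ ((1-θ) φ ∇φ + θ ψ ∇ψ)`. The triangle inequality followed by the
weighted Cauchy–Schwarz inequality in `ℝ²` bounds `‖(1-θ) φ ∇φ + θ ψ ∇ψ‖²` by
`((1-θ) φ² + θ ψ²) ((1-θ) ‖∇φ‖² + θ ‖∇ψ‖²) = ζ² ((1-θ) ‖∇φ‖² + θ ‖∇ψ‖²)`.
-/

open scoped Gradient

section Gradient

variable {E : Type*} [NormedAddCommGroup E] [InnerProductSpace ℝ E] [CompleteSpace E]
  {f g : E → ℝ} {f' g' x : E}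

theorem HasDerivAt.comp_hasGradientAt {h : ℝ → ℝ} {h' : ℝ} (hh : HasDerivAt h h' (f x))
    (hf : HasGradientAt f f' x) : HasGradientAt (fun y => h (f y)) (h' • f') x := by
  rw [hasGradientAt_iff_hasFDerivAt, map_smul]
  exact hh.comp_hasFDerivAt x hf.hasFDerivAt

theorem HasGradientAt.add (hf : HasGradientAt f f' x) (hg : HasGradientAt g g' x) :
    HasGradientAt (fun y => f y + g y) (f' + g') x := by
  rw [hasGradientAt_iff_hasFDerivAt, map_add]
  exact hf.hasFDerivAt.add hg.hasFDerivAt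

theorem HasGradientAt.const_mul_sq (c : ℝ) (hf : HasGradientAt f f' x) :
    HasGradientAt (fun y => c * f y ^ 2) ((2 * c * f x) • f') x := by
  convert ((hasDerivAt_pow 2 (f x)).const_mul c).comp_hasGradientAt hf using 2
  norm_num
  ring

theorem HasGradientAt.sqrt (hf : HasGradientAt f f' x) (hx : f x ≠ 0) :
    HasGradientAt (fun y => √(f y)) ((2 * √(f x))⁻¹ • f') x := by
  simpa only [one_div] using (Real.hasDerivAt_sqrt hx).comp_hasGradientAt hf

end Gradient

theorem norm_mul_smul_add_mul_smul_sq_le {F : Type*} [SeminormedAddCommGroup F]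
    [NormedSpace ℝ F] {a b : ℝ} (ha : 0 ≤ a) (hb : 0 ≤ b) (s t : ℝ) (u v : F) :
    ‖(a * s) • u + (b * t) • v‖ ^ 2 ≤ (a * s ^ 2 + b * t ^ 2) * (a * ‖u‖ ^ 2 + b * ‖v‖ ^ 2) := by
  have htri : ‖(a * s) • u + (b * t) • v‖ ≤ a * (|s| * ‖u‖) + b * (|t| * ‖v‖) := by
    refine (norm_add_le _ _).trans_eq ?_
    rw [norm_smul, norm_smul, Real.norm_eq_abs, Real.norm_eq_abs, abs_mul, abs_mul,
      abs_of_nonneg ha, abs_of_nonneg hb]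
    ring
  -- the gap in this Cauchy–Schwarz inequality is `a b (|s| ‖v‖ - |t| ‖u‖)²`
  have hcs : (a * (|s| * ‖u‖) + b * (|t| * ‖v‖)) ^ 2 ≤
      (a * |s| ^ 2 + b * |t| ^ 2) * (a * ‖u‖ ^ 2 + b * ‖v‖ ^ 2) := by
    nlinarith [mul_nonneg (mul_nonneg ha hb) (sq_nonneg (|s| * ‖v‖ - |t| * ‖u‖))]
  rw [sq_abs, sq_abs] at hcs
  exact (pow_le_pow_left₀ (norm_nonneg _) htri 2).trans hcs

section Weighted

variable {E : Type*} [NormedAddCommGroup E] [InnerProductSpace ℝ E] [CompleteSpace E]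
  {φ ψ : E → ℝ} {x : E} {a b : ℝ}

theorem hasGradientAt_sqrt_mul_sq_add_mul_sq (hφ : DifferentiableAt ℝ φ x)
    (hψ : DifferentiableAt ℝ ψ x) (hx : a * φ x ^ 2 + b * ψ x ^ 2 ≠ 0) :
    HasGradientAt (fun y => √(a * φ y ^ 2 + b * ψ y ^ 2))
      ((√(a * φ x ^ 2 + b * ψ x ^ 2))⁻¹ •
        ((a * φ x) • ∇ φ x + (b * ψ x) • ∇ ψ x)) x := by
  have := ((hφ.hasGradientAt.const_mul_sq a).add (hψ.hasGradientAt.const_mul_sq b)).sqrt hx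
  convert this using 1
  module

theorem norm_gradient_sqrt_mul_sq_add_mul_sq_sq_le (ha : 0 ≤ a) (hb : 0 ≤ b)
    (hφ : DifferentiableAt ℝ φ x) (hψ : DifferentiableAt ℝ ψ x)
    (hx : 0 < a * φ x ^ 2 + b * ψ x ^ 2) :
    ‖∇ (fun y => √(a * φ y ^ 2 + b * ψ y ^ 2)) x‖ ^ 2 ≤
      a * ‖∇ φ x‖ ^ 2 + b * ‖∇ ψ x‖ ^ 2 := by
  rw [(hasGradientAt_sqrt_mul_sq_add_mul_sq hφ hψ hx.ne').gradient, norm_smul, mul_pow,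
    norm_inv, Real.norm_of_nonneg (Real.sqrt_nonneg _), inv_pow, Real.sq_sqrt hx.le,
    inv_mul_le_iff₀ hx]
  exact norm_mul_smul_add_mul_smul_sq_le ha hb _ _ _ _

end Weighted

/-- The key convexity computation for the Donsker–Varadhan
functional: with `ζ = √((1−θ)φ² + θψ²)` and `ζ(x) > 0`, the function `ζ` is
differentiable at `x` and `‖∇ζ(x)‖² ≤ (1−θ)‖∇φ(x)‖² + θ‖∇ψ(x)‖²`. -/
theorem stmt_9 {E : Type*} [NormedAddCommGroup E] [InnerProductSpace ℝ E]
    [FiniteDimensional ℝ E] (θ : ℝ) (hθ : θ ∈ Set.Icc (0 : ℝ) 1) (x : E)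
    (φ ψ : E → ℝ) (hφ : DifferentiableAt ℝ φ x) (hψ : DifferentiableAt ℝ ψ x)
    (hpos : 0 < Real.sqrt ((1 - θ) * (φ x) ^ 2 + θ * (ψ x) ^ 2)) :
    DifferentiableAt ℝ
      (fun y => Real.sqrt ((1 - θ) * (φ y) ^ 2 + θ * (ψ y) ^ 2)) x ∧
    ‖gradient (fun y => Real.sqrt ((1 - θ) * (φ y) ^ 2 + θ * (ψ y) ^ 2)) x‖ ^ 2 ≤
      (1 - θ) * ‖gradient φ x‖ ^ 2 + θ * ‖gradient ψ x‖ ^ 2 := by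
  have hx := Real.sqrt_pos.mp hpos
  exact ⟨(hasGradientAt_sqrt_mul_sq_add_mul_sq hφ hψ hx.ne').differentiableAt,
    norm_gradient_sqrt_mul_sq_add_mul_sq_sq_le (sub_nonneg.mpr hθ.2) hθ.1 hφ hψ hx⟩
end

section
/- There exists a constant C > 0 such that for every integer k ≥ 2 and every real x ∈ (0, 1], one has x·sinh(kx) ≤ C·sinh((k − 4/3)·x)·sinh(x/2). Equivalently, the function F_k(x) := x·sinh(kx)/(sinh((k−1−ε)x)·sinh(x/2)) with ε = 1/3 is bounded by a universal constant C uniformly over all integers k ≥ 2 and all x ∈ (0, 1]. -/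
/-- Uniform boundedness of
`F_k(x) = x·sinh(kx) / (sinh((k−4/3)x)·sinh(x/2))` over integers `k ≥ 2` and
`x ∈ (0,1]`, stated in product form. -/
theorem stmt_12 :
    ∃ C > (0 : ℝ), ∀ k : ℕ, 2 ≤ k → ∀ x ∈ Set.Ioc (0 : ℝ) 1,
      x * Real.sinh (k * x) ≤
        C * Real.sinh ((k - 4 / 3 : ℝ) * x) * Real.sinh (x / 2) := by
  refine ⟨42, by norm_num, ?_⟩
  intro k hk x hx
  obtain ⟨hx0, hx1⟩ := hx
  have hk2 : (2 : ℝ) ≤ (k : ℝ) := by exact_mod_cast hk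
  set a : ℝ := ((k : ℝ) - 4 / 3) * x with ha_def
  set c : ℝ := 2 / 3 * x with hc_def
  have hca : c ≤ a := by
    rw [ha_def, hc_def]; nlinarith
  have hc0 : 0 < c := by rw [hc_def]; positivity
  have ha0 : 0 < a := lt_of_lt_of_le hc0 hca
  have hsinha : 0 ≤ Real.sinh a := Real.sinh_nonneg_iff.mpr ha0.le
  -- expand sinh (k x)
  have hkx : (k : ℝ) * x = a + 2 * c := by rw [ha_def, hc_def]; ring
  have hexp : Real.sinh ((k : ℝ) * x)
      = Real.sinh a * Real.cosh (2 * c) + Real.cosh a * Real.sinh (2 * c) := by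
    rw [hkx, Real.sinh_add]
  -- cosh a * sinh c ≤ sinh a * cosh c
  have hswap : Real.cosh a * Real.sinh c ≤ Real.sinh a * Real.cosh c := by
    have h := Real.sinh_nonneg_iff.mpr (sub_nonneg.mpr hca)
    rw [Real.sinh_sub] at h
    linarith
  have hcoshc : 0 < Real.cosh c := Real.cosh_pos c
  have hstep : Real.sinh ((k : ℝ) * x)
      ≤ Real.sinh a * (Real.cosh (2 * c) + 2 * Real.cosh c ^ 2) := by
    rw [hexp, Real.sinh_two_mul]
    nlinarith [hswap, hcoshc]
  -- numeric bounds on cosh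
  have hexp1 : Real.exp 1 ≤ 3 := by
    have := Real.exp_one_lt_d9
    linarith
  have hcosh_le : ∀ t : ℝ, 0 ≤ t → t ≤ 4 / 3 → Real.cosh t ≤ 3 := by
    intro t ht0 ht
    calc Real.cosh t ≤ Real.exp (t ^ 2 / 2) := Real.cosh_le_exp_half_sq t
      _ ≤ Real.exp 1 := by
          apply Real.exp_le_exp.mpr
          nlinarith
      _ ≤ 3 := hexp1
  have hb3 : Real.cosh (2 * c) ≤ 3 := by
    apply hcosh_le _ (by positivity)
    rw [hc_def]; nlinarith
  have hc3 : Real.cosh c ≤ 3 := by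
    apply hcosh_le _ hc0.le
    rw [hc_def]; nlinarith
  have hM : Real.cosh (2 * c) + 2 * Real.cosh c ^ 2 ≤ 21 := by nlinarith [hcoshc]
  have hMpos : 0 ≤ Real.cosh (2 * c) + 2 * Real.cosh c ^ 2 := by positivity
  -- sinh (x/2) ≥ x/2
  have hsinhx2 : x / 2 ≤ Real.sinh (x / 2) :=
    le_of_lt (Real.self_lt_sinh_iff.mpr (by positivity))
  calc x * Real.sinh ((k : ℝ) * x)
      ≤ x * (Real.sinh a * (Real.cosh (2 * c) + 2 * Real.cosh c ^ 2)) := by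
        apply mul_le_mul_of_nonneg_left hstep hx0.le
    _ ≤ x * (Real.sinh a * 21) := by
        apply mul_le_mul_of_nonneg_left _ hx0.le
        exact mul_le_mul_of_nonneg_left hM hsinha
    _ = 42 * Real.sinh a * (x / 2) := by ring
    _ ≤ 42 * Real.sinh a * Real.sinh (x / 2) := by
        apply mul_le_mul_of_nonneg_left hsinhx2
        positivity
end

section
/- Let d ≥ 2 be an integer. There exist constants C₁, C₂ > 0, depending only on d, with the following property. Let r, α > 0, let k ≥ 1 be an integer, and suppose θ ∈ (0, π/2] satisfies the volume-matching equation ∫₀^θ (sin u)^{d−2} du = (ω_{d−1}/ω_{d−2}) · ( ∫₀^r (sinh(αρ))^{d−1} dρ ) / ( ∫_{(k−1)r}^{kr} (sinh(αρ))^{d−1} dρ ). Then C₁ · sinh(αr/2)/sinh(kαr) ≤ θ ≤ C₂ · sinh(αr)/sinh((k−1)αr), where for k = 1 the upper bound is interpreted as vacuous (sinh(0) = 0). -/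
/-- The `m`-dimensional Hausdorff (surface) measure of the unit sphere
`S^m ⊂ ℝ^{m+1}`: `ω_m = 2 π^{(m+1)/2} / Γ((m+1)/2)` (so `ω₀ = 2`, `ω₁ = 2π`,
`ω₂ = 4π`, …). -/
noncomputable def sphereVol (m : ℕ) : ℝ :=
  2 * Real.pi ^ ((m + 1 : ℝ) / 2) / Real.Gamma ((m + 1 : ℝ) / 2)

/-! Since `ρ ↦ sinh (α ρ) ^ (d - 1)` is increasing, the integrals over the ball `[0, r]` and over
the shell `[(k - 1) r, k r]` are squeezed between values of the integrand times interval lengths,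
so their ratio lies between `(sinh (α r / 2) / sinh (k α r)) ^ (d - 1) / 2` and
`(sinh (α r) / sinh ((k - 1) α r)) ^ (d - 1)`. Jordan's inequality `2 u / π ≤ sin u ≤ u` on
`[0, π / 2]` makes `∫₀^θ sin ^ (d - 2)` comparable to `θ ^ (d - 1)`, and `(d - 1)`-th roots give
the two bounds. -/

open Real Set MeasureTheory

theorem sphereVol_pos (m : ℕ) : 0 < sphereVol m := by
  have := Gamma_pos_of_pos (by positivity : (0 : ℝ) < (m + 1 : ℝ) / 2)
  unfold sphereVol
  positivity

section Monotone

variable {f : ℝ → ℝ} {a b c : ℝ}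

theorem MonotoneOn.setIntegral_Icc_le_mul_sub (hf : MonotoneOn f (Icc a b)) (hab : a ≤ b) :
    ∫ x in Icc a b, f x ≤ f b * (b - a) := by
  have hb : b ∈ Icc a b := right_mem_Icc.2 hab
  calc ∫ x in Icc a b, f x ≤ ∫ _ in Icc a b, f b :=
        setIntegral_mono_on (hf.integrableOn_isCompact (μ := volume) isCompact_Icc)
          (integrableOn_const (by simp)) measurableSet_Icc fun x hx => hf hx hb hx.2
    _ = f b * (b - a) := by
      rw [setIntegral_const, volume_real_Icc_of_le hab, smul_eq_mul, mul_comm]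

theorem MonotoneOn.mul_sub_le_setIntegral_Icc (hf : MonotoneOn f (Icc a b)) (ha : 0 ≤ f a)
    (hc : c ∈ Icc a b) : f c * (b - c) ≤ ∫ x in Icc a b, f x := by
  have hint := hf.integrableOn_isCompact (μ := volume) isCompact_Icc
  have hsub : Icc c b ⊆ Icc a b := Icc_subset_Icc_left hc.1
  calc f c * (b - c) = f c * volume.real (Icc c b) := by rw [volume_real_Icc_of_le hc.2]
    _ ≤ ∫ x in Icc c b, f x :=
      setIntegral_ge_of_const_le_real measurableSet_Icc (by simp)
        (fun x hx => hf hc (hsub hx) hx.1) (hint.mono_set hsub)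
    _ ≤ ∫ x in Icc a b, f x :=
      setIntegral_mono_set hint
        ((ae_restrict_iff' measurableSet_Icc).2 <| ae_of_all _ fun x hx =>
          ha.trans (hf (left_mem_Icc.2 (hc.1.trans hc.2)) hx hx.1))
        hsub.eventuallyLE

end Monotone

theorem monotoneOn_sinh_mul_pow {α : ℝ} (hα : 0 ≤ α) (m : ℕ) :
    MonotoneOn (fun ρ => sinh (α * ρ) ^ m) (Ici 0) := fun _ hx _ _ hxy =>
  pow_le_pow_left₀ (sinh_nonneg_iff.2 (mul_nonneg hα hx))
    (sinh_le_sinh.2 (mul_le_mul_of_nonneg_left hxy hα)) m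

section Shell

variable {α r k : ℝ}

theorem sinh_div_sinh_pow_div_two_le (hα : 0 < α) (hr : 0 < r) (hk : 1 ≤ k) (m : ℕ) :
    (sinh (α * r / 2) / sinh (k * α * r)) ^ m / 2 ≤
      (∫ ρ in Icc 0 r, sinh (α * ρ) ^ m) / ∫ ρ in Icc ((k - 1) * r) (k * r), sinh (α * ρ) ^ m := by
  have hmono {a b : ℝ} (ha : 0 ≤ a) : MonotoneOn (fun ρ => sinh (α * ρ) ^ m) (Icc a b) :=
    (monotoneOn_sinh_mul_pow hα.le m).mono (Icc_subset_Ici_self.trans (Ici_subset_Ici.2 ha))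
  have hk0 : 0 ≤ (k - 1) * r := mul_nonneg (by linarith) hr.le
  have hball : sinh (α * (r / 2)) ^ m * (r - r / 2) ≤ ∫ ρ in Icc 0 r, sinh (α * ρ) ^ m :=
    (hmono le_rfl).mul_sub_le_setIntegral_Icc (by simp) ⟨by positivity, by linarith⟩
  have hshell : ∫ ρ in Icc ((k - 1) * r) (k * r), sinh (α * ρ) ^ m ≤
      sinh (α * (k * r)) ^ m * (k * r - (k - 1) * r) :=
    (hmono hk0).setIntegral_Icc_le_mul_sub (by nlinarith)
  -- the value at the interior point `(k - 1 / 2) r` makes the shell integral positive also for `k = 1`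
  have hshell_pos : sinh (α * ((k - 1 / 2) * r)) ^ m * (k * r - (k - 1 / 2) * r) ≤
      ∫ ρ in Icc ((k - 1) * r) (k * r), sinh (α * ρ) ^ m :=
    (hmono hk0).mul_sub_le_setIntegral_Icc (pow_nonneg (sinh_nonneg_iff.2 (mul_nonneg hα.le hk0)) _)
      ⟨by nlinarith, by nlinarith⟩
  have hD : 0 < ∫ ρ in Icc ((k - 1) * r) (k * r), sinh (α * ρ) ^ m :=
    lt_of_lt_of_le (mul_pos (pow_pos (sinh_pos_iff.2 (by nlinarith)) _) (by linarith)) hshell_pos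
  have hsinh : 0 < sinh (k * α * r) := sinh_pos_iff.2 (by positivity)
  rw [show α * (r / 2) = α * r / 2 by ring, show r - r / 2 = r / 2 by ring] at hball
  rw [show α * (k * r) = k * α * r by ring, show k * r - (k - 1) * r = r by ring] at hshell
  calc (sinh (α * r / 2) / sinh (k * α * r)) ^ m / 2
      = sinh (α * r / 2) ^ m * (r / 2) / (sinh (k * α * r) ^ m * r) := by
        rw [div_pow]; field_simp
    _ ≤ _ := by
      refine div_le_div₀ (le_trans ?_ hball) hball hD hshell
      exact mul_nonneg (pow_nonneg (sinh_nonneg_iff.2 (by positivity)) _) (by positivity)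

theorem div_le_sinh_div_sinh_pow (hα : 0 < α) (hr : 0 < r) (hk : 1 < k) (m : ℕ) :
    (∫ ρ in Icc 0 r, sinh (α * ρ) ^ m) / (∫ ρ in Icc ((k - 1) * r) (k * r), sinh (α * ρ) ^ m) ≤
      (sinh (α * r) / sinh ((k - 1) * α * r)) ^ m := by
  have hmono {a b : ℝ} (ha : 0 ≤ a) : MonotoneOn (fun ρ => sinh (α * ρ) ^ m) (Icc a b) :=
    (monotoneOn_sinh_mul_pow hα.le m).mono (Icc_subset_Ici_self.trans (Ici_subset_Ici.2 ha))
  have hk0 : 0 < (k - 1) * r := mul_pos (by linarith) hr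
  have hsinh : 0 < sinh ((k - 1) * α * r) := sinh_pos_iff.2 (by nlinarith)
  have hball : ∫ ρ in Icc 0 r, sinh (α * ρ) ^ m ≤ sinh (α * r) ^ m * (r - 0) :=
    (hmono le_rfl).setIntegral_Icc_le_mul_sub hr.le
  have hshell : sinh (α * ((k - 1) * r)) ^ m * (k * r - (k - 1) * r) ≤
      ∫ ρ in Icc ((k - 1) * r) (k * r), sinh (α * ρ) ^ m :=
    (hmono hk0.le).mul_sub_le_setIntegral_Icc (pow_nonneg (sinh_nonneg_iff.2 (by positivity)) _)
      (left_mem_Icc.2 (by linarith))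
  rw [sub_zero] at hball
  rw [show α * ((k - 1) * r) = (k - 1) * α * r by ring, show k * r - (k - 1) * r = r by ring]
    at hshell
  calc _ ≤ sinh (α * r) ^ m * r / (sinh ((k - 1) * α * r) ^ m * r) :=
        div_le_div₀ (mul_nonneg (pow_nonneg (sinh_nonneg_iff.2 (by positivity)) _) hr.le) hball
          (by positivity) hshell
    _ = (sinh (α * r) / sinh ((k - 1) * α * r)) ^ m := by
      rw [div_pow]; field_simp

end Shell

theorem setIntegral_Icc_zero_pow {θ : ℝ} (hθ : 0 ≤ θ) (n : ℕ) :
    ∫ u in Icc 0 θ, u ^ n = θ ^ (n + 1) / (n + 1) := by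
  rw [integral_Icc_eq_integral_Ioc, ← intervalIntegral.integral_of_le hθ, integral_pow]
  simp

theorem setIntegral_Icc_sin_pow_le {θ : ℝ} (hθ : 0 ≤ θ) (n : ℕ) :
    ∫ u in Icc 0 θ, sin u ^ n ≤ θ ^ (n + 1) / (n + 1) := by
  rw [← setIntegral_Icc_zero_pow hθ]
  refine setIntegral_mono_on (Continuous.integrableOn_Icc (by fun_prop))
    (Continuous.integrableOn_Icc (by fun_prop)) measurableSet_Icc fun u hu => ?_
  calc sin u ^ n ≤ |sin u| ^ n := (le_abs_self _).trans (abs_pow _ _).le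
    _ ≤ |u| ^ n := pow_le_pow_left₀ (abs_nonneg _) abs_sin_le_abs n
    _ = u ^ n := by rw [abs_of_nonneg hu.1]

theorem le_setIntegral_Icc_sin_pow {θ : ℝ} (hθ₀ : 0 ≤ θ) (hθ : θ ≤ π / 2) (n : ℕ) :
    (2 / π) ^ n * (θ ^ (n + 1) / (n + 1)) ≤ ∫ u in Icc 0 θ, sin u ^ n := by
  rw [← setIntegral_Icc_zero_pow hθ₀, ← integral_const_mul]
  refine setIntegral_mono_on (Continuous.integrableOn_Icc (by fun_prop))
    (Continuous.integrableOn_Icc (by fun_prop)) measurableSet_Icc fun u hu => ?_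
  rw [← mul_pow]
  exact pow_le_pow_left₀ (mul_nonneg (by positivity) hu.1) (mul_le_sin hu.1 (hu.2.trans hθ)) n

theorem rpow_inv_mul_le_of_mul_pow_le {c x y : ℝ} {m : ℕ} (hm : m ≠ 0) (hc : 0 ≤ c) (hx : 0 ≤ x)
    (hy : 0 ≤ y) (h : c * x ^ m ≤ y ^ m) : c ^ (m⁻¹ : ℝ) * x ≤ y :=
  (pow_le_pow_iff_left₀ (by positivity) hy hm).1 (by rwa [mul_pow, rpow_inv_natCast_pow hc hm])

theorem le_rpow_inv_mul_of_pow_le_mul_pow {c x y : ℝ} {m : ℕ} (hm : m ≠ 0) (hc : 0 ≤ c)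
    (hx : 0 ≤ x) (hy : 0 ≤ y) (h : y ^ m ≤ c * x ^ m) : y ≤ c ^ (m⁻¹ : ℝ) * x :=
  (pow_le_pow_iff_left₀ hy (by positivity) hm).1 (by rwa [mul_pow, rpow_inv_natCast_pow hc hm])

section VolumeMatching

variable {n : ℕ} {c r α k θ : ℝ}

theorem mul_sinh_div_sinh_pow_le_of_volume_eq (hc : 0 ≤ c) (hr : 0 < r) (hα : 0 < α)
    (hk : 1 ≤ k) (hθ : 0 ≤ θ)
    (hvol : ∫ u in Icc 0 θ, sin u ^ n = c * ((∫ ρ in Icc 0 r, sinh (α * ρ) ^ (n + 1)) /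
      ∫ ρ in Icc ((k - 1) * r) (k * r), sinh (α * ρ) ^ (n + 1))) :
    (n + 1) * c / 2 * (sinh (α * r / 2) / sinh (k * α * r)) ^ (n + 1) ≤ θ ^ (n + 1) := by
  have h := (mul_le_mul_of_nonneg_left (sinh_div_sinh_pow_div_two_le hα hr hk (n + 1)) hc).trans
    (hvol.ge.trans (setIntegral_Icc_sin_pow_le hθ n))
  rw [le_div_iff₀ (by positivity)] at h
  linear_combination h

theorem pow_le_mul_sinh_div_sinh_pow_of_volume_eq (hc : 0 ≤ c) (hr : 0 < r) (hα : 0 < α)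
    (hk : 1 < k) (hθ₀ : 0 ≤ θ) (hθ : θ ≤ π / 2)
    (hvol : ∫ u in Icc 0 θ, sin u ^ n = c * ((∫ ρ in Icc 0 r, sinh (α * ρ) ^ (n + 1)) /
      ∫ ρ in Icc ((k - 1) * r) (k * r), sinh (α * ρ) ^ (n + 1))) :
    θ ^ (n + 1) ≤ (n + 1) * c * (π / 2) ^ n * (sinh (α * r) / sinh ((k - 1) * α * r)) ^ (n + 1) := by
  have h := (le_setIntegral_Icc_sin_pow hθ₀ hθ n).trans (hvol.le.trans
    (mul_le_mul_of_nonneg_left (div_le_sinh_div_sinh_pow hα hr hk (n + 1)) hc))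
  have hπ : (π / 2) ^ n * (2 / π) ^ n = 1 := by
    rw [← mul_pow, div_mul_div_comm, mul_comm, div_self (by positivity), one_pow]
  rw [mul_div_assoc', div_le_iff₀ (by positivity)] at h
  linear_combination (π / 2) ^ n * h - θ ^ (n + 1) * hπ

end VolumeMatching

/-- Two-sided estimate for the angular radius `θ` determined by the
volume-matching equation in the decomposition of a large hyperbolic geodesic ball:
`C₁ sinh(αr/2)/sinh(kαr) ≤ θ ≤ C₂ sinh(αr)/sinh((k−1)αr)`, where for `k = 1` the
upper bound is vacuous. -/
theorem stmt_14 (d : ℕ) (hd : 2 ≤ d) :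
    ∃ C₁ > (0 : ℝ), ∃ C₂ > (0 : ℝ), ∀ r α : ℝ, 0 < r → 0 < α →
      ∀ k : ℕ, 1 ≤ k → ∀ θ : ℝ, θ ∈ Set.Ioc 0 (Real.pi / 2) →
      (∫ u in Set.Icc (0 : ℝ) θ, Real.sin u ^ (d - 2)) =
        (sphereVol (d - 1) / sphereVol (d - 2)) *
          ((∫ ρ in Set.Icc (0 : ℝ) r, Real.sinh (α * ρ) ^ (d - 1)) /
            (∫ ρ in Set.Icc ((k - 1 : ℝ) * r) (k * r),
              Real.sinh (α * ρ) ^ (d - 1))) →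
      C₁ * (Real.sinh (α * r / 2) / Real.sinh (k * α * r)) ≤ θ ∧
        (2 ≤ k →
          θ ≤ C₂ * (Real.sinh (α * r) / Real.sinh ((k - 1 : ℝ) * α * r))) := by
  obtain ⟨n, rfl⟩ : ∃ n, d = n + 2 := ⟨d - 2, by omega⟩
  simp only [Nat.add_sub_cancel, show n + 2 - 1 = n + 1 by omega]
  set c := sphereVol (n + 1) / sphereVol n
  have hc : 0 < c := div_pos (sphereVol_pos _) (sphereVol_pos _)
  refine ⟨((n + 1) * c / 2) ^ ((n + 1 : ℕ) : ℝ)⁻¹, by positivity,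
    ((n + 1) * c * (π / 2) ^ n) ^ ((n + 1 : ℕ) : ℝ)⁻¹, by positivity, ?_⟩
  rintro r α hr hα k hk θ ⟨hθ₀, hθ⟩ hvol
  have hk₁ : (1 : ℝ) ≤ k := by exact_mod_cast hk
  constructor
  · exact rpow_inv_mul_le_of_mul_pow_le n.succ_ne_zero (by positivity)
      (div_nonneg (sinh_nonneg_iff.2 (by positivity)) (sinh_nonneg_iff.2 (by positivity))) hθ₀.le
      (mul_sinh_div_sinh_pow_le_of_volume_eq hc.le hr hα hk₁ hθ₀.le hvol)
  · intro hk₂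
    have hk₂' : (1 : ℝ) < k := by exact_mod_cast hk₂
    have hk₀ : (0 : ℝ) ≤ k - 1 := by linarith
    exact le_rpow_inv_mul_of_pow_le_mul_pow n.succ_ne_zero (by positivity)
      (div_nonneg (sinh_nonneg_iff.2 (by positivity)) (sinh_nonneg_iff.2 (by positivity))) hθ₀.le
      (pow_le_mul_sinh_div_sinh_pow_of_volume_eq hc.le hr hα hk₂' hθ₀.le hθ hvol)
end

section
/- For every constant c > 0 there exist δ > 0 and C > 0 such that the following holds: for every integer k ≥ 2, every real x ∈ (0, δ), every angle φ ∈ [0, π] with φ ≤ 2c·sinh(x)/sinh((k−1)x), and every D ≥ 0 satisfying cosh D = 1 + (1 − cos φ)·sinh²(kx), one has D ≤ C·x. -/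
open Real

lemma sinh_le_two_mul {x : ℝ} (hx0 : 0 < x) (hx1 : x < 1) : Real.sinh x ≤ 2 * x := by
  have hb := Real.exp_bound (x := x) (by rw [abs_of_pos hx0]; exact hx1.le) (n := 2) (by norm_num)
  have hsum : ∑ i ∈ Finset.range 2, x ^ i / i.factorial = 1 + x := by
    simp [Finset.sum_range_succ]
  rw [hsum] at hb
  have h1 : Real.exp x ≤ 1 + x + |x| ^ 2 * ((2 : ℕ).succ / ((2:ℕ).factorial * 2)) := by
    have := abs_le.1 hb
    linarith [this.2]
  have h2 : (1 : ℝ) - x ≤ Real.exp (-x) := by linarith [Real.add_one_le_exp (-x)]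
  have habs : |x| ^ 2 = x ^ 2 := by rw [abs_of_pos hx0]
  rw [Real.sinh_eq]
  rw [habs] at h1
  norm_num at h1
  nlinarith

set_option maxHeartbeats 1600000 in
/-- The analytic core of the diameter estimate: if `k ≥ 2`,
`x ∈ (0, δ)`, the angle `φ ∈ [0, π]` satisfies `φ ≤ 2c·sinh(x)/sinh((k−1)x)`, and
`D ≥ 0` satisfies `cosh D = 1 + (1 − cos φ)·sinh²(kx)`, then `D ≤ C x`, with
constants `δ, C` depending only on `c`. -/
theorem stmt_15 (c : ℝ) (hc : 0 < c) :
    ∃ δ > (0 : ℝ), ∃ C > (0 : ℝ), ∀ k : ℕ, 2 ≤ k →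
      ∀ x ∈ Set.Ioo (0 : ℝ) δ, ∀ φ ∈ Set.Icc (0 : ℝ) Real.pi,
        φ ≤ 2 * c * Real.sinh x / Real.sinh ((k - 1 : ℝ) * x) →
        ∀ D : ℝ, 0 ≤ D →
          Real.cosh D = 1 + (1 - Real.cos φ) * Real.sinh (k * x) ^ 2 →
          D ≤ C * x := by
  refine ⟨1, one_pos, 8 * c * Real.cosh 1, by positivity, ?_⟩
  intro k hk x hx φ hφ hφle D hD hcosh
  obtain ⟨hx0, hx1⟩ := hx
  obtain ⟨hφ0, hφπ⟩ := hφ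
  have hk1 : (1 : ℝ) ≤ (k : ℝ) - 1 := by
    have : (2 : ℝ) ≤ (k : ℝ) := by exact_mod_cast hk
    linarith
  have hsx : 0 < Real.sinh x := Real.sinh_pos_iff.2 hx0
  have hskx : 0 < Real.sinh (((k : ℝ) - 1) * x) := Real.sinh_pos_iff.2 (by nlinarith)
  -- 1 - cos φ ≤ φ^2 / 2
  have hcos : 1 - Real.cos φ ≤ φ ^ 2 / 2 := by
    have hhalf0 : 0 ≤ φ / 2 := by linarith
    have hhalfπ : φ / 2 ≤ Real.pi := by linarith [Real.pi_pos]
    have hsin0 : 0 ≤ Real.sin (φ / 2) := Real.sin_nonneg_of_nonneg_of_le_pi hhalf0 hhalfπ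
    have hsinle : Real.sin (φ / 2) ≤ φ / 2 := Real.sin_le hhalf0
    have hid : Real.cos φ = 1 - 2 * Real.sin (φ / 2) ^ 2 := by
      have h1 : Real.cos (2 * (φ / 2)) = 2 * Real.cos (φ / 2) ^ 2 - 1 := Real.cos_two_mul _
      have h2 : Real.sin (φ/2) ^ 2 + Real.cos (φ/2) ^ 2 = 1 := Real.sin_sq_add_cos_sq _
      have h3 : 2 * (φ / 2) = φ := by ring
      rw [h3] at h1
      linarith
    nlinarith
  -- ratio bound: sinh(kx) ≤ 2 cosh x sinh((k-1)x)
  have hratio : Real.sinh ((k : ℝ) * x) ≤ 2 * Real.cosh x * Real.sinh (((k : ℝ) - 1) * x) := by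
    have heq : (k : ℝ) * x = ((k : ℝ) - 1) * x + x := by ring
    rw [heq, Real.sinh_add]
    have hsub : 0 ≤ Real.sinh (((k : ℝ) - 1) * x - x) := by
      rw [Real.sinh_nonneg_iff]; nlinarith
    rw [Real.sinh_sub] at hsub
    have hcx : 0 < Real.cosh x := Real.cosh_pos x
    nlinarith
  -- φ * sinh((k-1)x) ≤ 2 c sinh x
  have hφmul : φ * Real.sinh (((k : ℝ) - 1) * x) ≤ 2 * c * Real.sinh x :=
    (le_div_iff₀ hskx).1 hφle
  have hskx0 : 0 ≤ Real.sinh ((k : ℝ) * x) := Real.sinh_nonneg_iff.2 (by positivity)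
  -- φ * sinh(kx) ≤ 4 c sinh x cosh x
  have hkey : φ * Real.sinh ((k : ℝ) * x) ≤ 4 * c * Real.sinh x * Real.cosh x := by
    have hcx : 0 < Real.cosh x := Real.cosh_pos x
    nlinarith
  -- cosh D - 1 ≤ 8 c^2 sinh^2 x cosh^2 x
  have hb : Real.cosh D - 1 ≤ 8 * c ^ 2 * Real.sinh x ^ 2 * Real.cosh x ^ 2 := by
    rw [hcosh]
    have h1 : (1 - Real.cos φ) * Real.sinh ((k : ℝ) * x) ^ 2
        ≤ (φ ^ 2 / 2) * Real.sinh ((k : ℝ) * x) ^ 2 := by nlinarith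
    have h2 : (φ * Real.sinh ((k : ℝ) * x)) ^ 2 ≤ (4 * c * Real.sinh x * Real.cosh x) ^ 2 := by
      have : 0 ≤ φ * Real.sinh ((k : ℝ) * x) := mul_nonneg hφ0 hskx0
      nlinarith
    nlinarith
  -- D^2 / 2 ≤ cosh D - 1
  have hDlb : D ^ 2 / 2 ≤ Real.cosh D - 1 := by
    have hsinh : D / 2 ≤ Real.sinh (D / 2) := Real.self_le_sinh_iff.2 (by linarith)
    have hid : Real.cosh D = 2 * Real.sinh (D / 2) ^ 2 + 1 := by
      have h1 : Real.cosh (2 * (D / 2)) = Real.cosh (D / 2) ^ 2 + Real.sinh (D / 2) ^ 2 :=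
        Real.cosh_two_mul _
      have h2 : Real.cosh (D / 2) ^ 2 = Real.sinh (D / 2) ^ 2 + 1 := Real.cosh_sq _
      have h3 : 2 * (D / 2) = D := by ring
      rw [h3] at h1; rw [h1, h2]; ring
    have h4 : (D / 2) ^ 2 ≤ Real.sinh (D / 2) ^ 2 :=
      pow_le_pow_left₀ (by linarith : (0:ℝ) ≤ D / 2) hsinh 2
    have h5 : D ^ 2 / 2 = 2 * (D / 2) ^ 2 := by ring
    rw [hid]
    linarith
  -- bounds: sinh x ≤ 2x, cosh x ≤ cosh 1
  have hs2 : Real.sinh x ≤ 2 * x := sinh_le_two_mul hx0 hx1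
  have hc1 : Real.cosh x ≤ Real.cosh 1 := by
    rw [Real.cosh_le_cosh]
    rw [abs_of_pos hx0, abs_one]; exact hx1.le
  have hcx : 0 < Real.cosh x := Real.cosh_pos x
  have hc1' : (1 : ℝ) ≤ Real.cosh 1 := Real.one_le_cosh 1
  -- conclude: D^2 ≤ (8 c cosh 1 x)^2
  have hm : Real.sinh x * Real.cosh x ≤ 2 * x * Real.cosh 1 :=
    mul_le_mul hs2 hc1 hcx.le (by positivity)
  have hm2 : (Real.sinh x * Real.cosh x) ^ 2 ≤ (2 * x * Real.cosh 1) ^ 2 :=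
    pow_le_pow_left₀ (by positivity) hm 2
  have h7 : 16 * c ^ 2 * (Real.sinh x * Real.cosh x) ^ 2
      ≤ 16 * c ^ 2 * (2 * x * Real.cosh 1) ^ 2 :=
    mul_le_mul_of_nonneg_left hm2 (by positivity)
  have hfin : D ^ 2 ≤ (8 * c * Real.cosh 1 * x) ^ 2 := by
    have e : (8 * c * Real.cosh 1 * x) ^ 2 = 16 * c ^ 2 * (2 * x * Real.cosh 1) ^ 2 := by ring
    have e2 : 8 * c ^ 2 * Real.sinh x ^ 2 * Real.cosh x ^ 2
        = 8 * c ^ 2 * (Real.sinh x * Real.cosh x) ^ 2 := by ring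
    rw [e]
    linarith only [hDlb, hb, h7, e2]
  have hB : (0:ℝ) ≤ 8 * c * Real.cosh 1 * x := by positivity
  have h := Real.sqrt_le_sqrt hfin
  rwa [Real.sqrt_sq hD, Real.sqrt_sq hB] at h
end
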